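/- arXiv:2210.11338 — 8 statements merged into one kernel-verified Lean document; each statement's English description precedes it below -/
import Mathlib

section
/- Let r ≥ 3, e ≥ 3, k ≥ 2 be integers with r > k, and let F be an r-uniform hypergraph on [n] that is G_r(er-(e-1)k, e)-free, i.e., any e distinct edges of F have union of size at least er-(e-1)k+1. Then for every (k-1)-element subset T of [n], the (r-k+1)-uniform hypergraph {A \ T : A ∈ F, T ⊆ A} on vertex set [n] \ T is G_{r-k+1}(e(r-k+1)-(e-1), e)-free. -/
open Finset

/-- `F` is an `r`-uniform hypergraph: every edge has `r` vertices. -/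
def UniformH {n : ℕ} (r : ℕ) (F : Finset (Finset (Fin n))) : Prop :=
  ∀ A ∈ F, A.card = r

/-- `F` is `G_r(v,e)`-free: any `e` distinct edges have union of size at least `v+1`. -/
def IsGFree {n : ℕ} (v e : ℕ) (F : Finset (Finset (Fin n))) : Prop :=
  ∀ S ⊆ F, S.card = e → v + 1 ≤ (S.biUnion id).card

/-- `f_r(n,v,e)`: the maximum number of edges of an `n`-vertex `G_r(v,e)`-free
`r`-uniform hypergraph. -/
noncomputable def extremalF (r n v e : ℕ) : ℕ :=
  sSup {m | ∃ F : Finset (Finset (Fin n)), UniformH r F ∧ IsGFree v e F ∧ F.card = m}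

theorem stmt_1 (n r e k : ℕ) (hr : 3 ≤ r) (he : 3 ≤ e) (hk : 2 ≤ k) (hrk : k < r)
    (F : Finset (Finset (Fin n))) (hF : UniformH r F)
    (hfree : IsGFree (e * r - (e - 1) * k) e F) :
    ∀ T : Finset (Fin n), T.card = k - 1 →
      IsGFree (e * (r - k + 1) - (e - 1)) e
        ((F.filter (fun A => T ⊆ A)).image (fun A => A \ T)) := by
  intro T hT S hS hScard
  set S' : Finset (Finset (Fin n)) :=
    (F.filter (fun A => T ⊆ A)).filter (fun A => A \ T ∈ S) with hS'def
  have hS'F : S' ⊆ F := (filter_subset _ _).trans (filter_subset _ _)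
  have hTsub : ∀ A ∈ S', T ⊆ A := by
    intro A hA
    exact (mem_filter.mp ((filter_subset _ _) hA)).2
  have himg : S'.image (fun A => A \ T) = S := by
    apply Subset.antisymm
    · intro B hB
      obtain ⟨A, hA, rfl⟩ := mem_image.mp hB
      exact (mem_filter.mp hA).2
    · intro B hB
      obtain ⟨A, hA, rfl⟩ := mem_image.mp (hS hB)
      exact mem_image.mpr ⟨A, mem_filter.mpr ⟨hA, hB⟩, rfl⟩
  have hinj : Set.InjOn (fun A => A \ T) S' := by
    intro A1 h1 A2 h2 h12
    have e1 : A1 \ T ∪ T = A1 := sdiff_union_of_subset (hTsub A1 h1)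
    have e2 : A2 \ T ∪ T = A2 := sdiff_union_of_subset (hTsub A2 h2)
    simp only at h12
    rw [← e1, ← e2, h12]
  have hcard' : S'.card = e := by
    rw [← hScard, ← himg, card_image_of_injOn hinj]
  have hbig := hfree S' hS'F hcard'
  have hbiU : S.biUnion id = (S'.biUnion id) \ T := by
    rw [← himg]
    ext x
    simp only [mem_biUnion, mem_image, id, mem_sdiff]
    constructor
    · rintro ⟨B, ⟨A, hA, rfl⟩, hx⟩
      exact ⟨⟨A, hA, (mem_sdiff.mp hx).1⟩, (mem_sdiff.mp hx).2⟩
    · rintro ⟨⟨A, hA, hx⟩, hxT⟩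
      exact ⟨A \ T, ⟨A, hA, rfl⟩, mem_sdiff.mpr ⟨hx, hxT⟩⟩
  have hS'ne : S'.Nonempty := by
    rw [← card_pos, hcard']; omega
  obtain ⟨A0, hA0⟩ := hS'ne
  have hTbiU : T ⊆ S'.biUnion id := by
    intro x hx
    exact mem_biUnion.mpr ⟨A0, hA0, hTsub A0 hA0 hx⟩
  have hcards : (S.biUnion id).card = (S'.biUnion id).card - (k - 1) := by
    rw [hbiU, card_sdiff_of_subset hTbiU, hT]
  rw [hcards]
  -- arithmetic
  obtain ⟨d, hd, hd1⟩ : ∃ d, r = k + d ∧ 1 ≤ d := ⟨r - k, by omega, by omega⟩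
  obtain ⟨e', rfl⟩ : ∃ e', e = e' + 1 := ⟨e - 1, by omega⟩
  subst hd
  have h2 : (e' + 1) * (k + d) - (e' + 1 - 1) * k = e' * d + k + d := by
    have : (e' + 1) * (k + d) = e' * k + (e' * d + k + d) := by ring
    simp only [Nat.add_sub_cancel, this, Nat.add_sub_cancel_left]
  rw [show k + d - k + 1 = d + 1 by omega]
  have h1' : (e' + 1) * (d + 1) - (e' + 1 - 1) = e' * d + d + 1 := by
    have : (e' + 1) * (d + 1) = e' + (e' * d + d + 1) := by ring
    simp only [this, Nat.add_sub_cancel, Nat.add_sub_cancel_left]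
  rw [h1']
  rw [h2] at hbig
  omega
end

section
/- Let r ≥ 3, e ≥ 3, k ≥ 2 with r > k. Then f_r(n, er-(e-1)k, e) - (e-1)·C(n, k-1) ≤ f_r^{(e-1)}(n, er-(e-1)k, e), where f_r^{(e-1)} counts the maximum number of edges of an n-vertex r-graph that is G_r(er-(e-1)k, e)-free, is G_r((e-1)r-(e-2)k-1, e-1)-free, and in which every (k-1)-subset has codegree 0 or at least e. -/
open Finset

/-- `f_r^{(e-1)}(n, er-(e-1)k, e)`: the maximum number of edges of an `n`-vertex
`r`-graph that is `G_r(er-(e-1)k, e)`-free, `G_r((e-1)r-(e-2)k-1, e-1)`-free,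
and in which every `(k-1)`-subset has codegree `0` or at least `e`. -/
noncomputable def extremalFE1 (r n e k : ℕ) : ℕ :=
  sSup {m | ∃ F : Finset (Finset (Fin n)), UniformH r F ∧
    IsGFree (e * r - (e - 1) * k) e F ∧
    IsGFree ((e - 1) * r - (e - 2) * k - 1) (e - 1) F ∧
    (∀ T : Finset (Fin n), T.card = k - 1 →
      (F.filter (fun A => T ⊆ A)).card = 0 ∨ e ≤ (F.filter (fun A => T ⊆ A)).card) ∧
    F.card = m}

lemma isGFree_mono {n : ℕ} {v e : ℕ} {F F' : Finset (Finset (Fin n))}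
    (h : F' ⊆ F) (hF : IsGFree v e F) : IsGFree v e F' :=
  fun S hS hc => hF S (hS.trans h) hc

lemma delete {n : ℕ} (r v e k : ℕ) (he : 1 ≤ e) :
    ∀ N (F : Finset (Finset (Fin n))), F.card ≤ N → UniformH r F → IsGFree v e F →
    ∃ F', F' ⊆ F ∧ UniformH r F' ∧ IsGFree v e F' ∧
      (∀ T : Finset (Fin n), T.card = k - 1 →
        (F'.filter (fun A => T ⊆ A)).card = 0 ∨ e ≤ (F'.filter (fun A => T ⊆ A)).card) ∧
      (F.card : ℤ) - (F'.card : ℤ) ≤ ((e : ℤ) - 1) *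
        ((((univ : Finset (Finset (Fin n))).filter
          (fun T => T.card = k - 1 ∧ 0 < (F.filter (fun A => T ⊆ A)).card)).card : ℤ)) := by
  intro N
  induction N with
  | zero =>
    intro F hcard hU hG
    have hFe : F = ∅ := card_eq_zero.mp (Nat.le_zero.mp hcard)
    subst hFe
    refine ⟨∅, Subset.rfl, hU, hG, fun T hT => Or.inl (by simp), ?_⟩
    have h1 : (1:ℤ) ≤ (e:ℤ) := by exact_mod_cast he
    have h2 := mul_nonneg (by linarith : (0:ℤ) ≤ (e:ℤ)-1)
      (Int.natCast_nonneg (((univ : Finset (Finset (Fin n))).filter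
          (fun T => T.card = k - 1 ∧ 0 < ((∅ : Finset (Finset (Fin n))).filter (fun A => T ⊆ A)).card)).card))
    simp only [card_empty, Nat.cast_zero, sub_zero, sub_self]
    linarith
  | succ N ih =>
    intro F hcard hU hG
    by_cases hcode : ∀ T : Finset (Fin n), T.card = k - 1 →
        (F.filter (fun A => T ⊆ A)).card = 0 ∨ e ≤ (F.filter (fun A => T ⊆ A)).card
    · refine ⟨F, Subset.rfl, hU, hG, hcode, ?_⟩
      have h1 : (1:ℤ) ≤ (e:ℤ) := by exact_mod_cast he
      have h2 := mul_nonneg (by linarith : (0:ℤ) ≤ (e:ℤ)-1)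
        (Int.natCast_nonneg (((univ : Finset (Finset (Fin n))).filter
          (fun T => T.card = k - 1 ∧ 0 < (F.filter (fun A => T ⊆ A)).card)).card))
      linarith
    · push_neg at hcode
      obtain ⟨T, hT, hd0, hdlt⟩ := hcode
      set F₁ := F.filter (fun A => ¬ T ⊆ A) with hF₁def
      have hsub : F₁ ⊆ F := filter_subset _ _
      have hsplit : (F.filter (fun A => T ⊆ A)).card + F₁.card = F.card :=
        card_filter_add_card_filter_not _
      have hdpos : 0 < (F.filter (fun A => T ⊆ A)).card := Nat.pos_of_ne_zero hd0
      have hlt : F₁.card ≤ N := by omega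
      obtain ⟨F', hF'sub, hF'U, hF'G, hF'code, hF'ineq⟩ :=
        ih F₁ hlt (fun A hA => hU A (hsub hA)) (isGFree_mono hsub hG)
      refine ⟨F', hF'sub.trans hsub, hF'U, hF'G, hF'code, ?_⟩
      set PF := ((univ : Finset (Finset (Fin n))).filter
          (fun T' => T'.card = k - 1 ∧ 0 < (F.filter (fun A => T' ⊆ A)).card)) with hPFdef
      set PF₁ := ((univ : Finset (Finset (Fin n))).filter
          (fun T' => T'.card = k - 1 ∧ 0 < (F₁.filter (fun A => T' ⊆ A)).card)) with hPF₁def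
      have hTin : T ∈ PF := mem_filter.mpr ⟨mem_univ _, hT, hdpos⟩
      have hPsub : PF₁ ⊆ PF.erase T := by
        intro T' hT'
        obtain ⟨_, hT'c, hT'pos⟩ := mem_filter.mp hT'
        have hT'F : 0 < (F.filter (fun A => T' ⊆ A)).card :=
          lt_of_lt_of_le hT'pos (card_le_card (filter_subset_filter _ hsub))
        refine mem_erase.mpr ⟨?_, mem_filter.mpr ⟨mem_univ _, hT'c, hT'F⟩⟩
        rintro rfl
        have hemp : F₁.filter (fun A => T' ⊆ A) = ∅ := by
          rw [hF₁def, filter_filter]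
          exact filter_false_of_mem (fun A _ => by tauto)
        rw [hemp] at hT'pos
        simp at hT'pos
      have hPcard : PF₁.card + 1 ≤ PF.card := by
        have h1 := card_le_card hPsub
        have h2 : (PF.erase T).card = PF.card - 1 := card_erase_of_mem hTin
        have h3 : 1 ≤ PF.card := card_pos.mpr ⟨T, hTin⟩
        omega
      have h1 : (1:ℤ) ≤ (e:ℤ) := by exact_mod_cast he
      have hmul : ((e:ℤ)-1) * (PF₁.card : ℤ) ≤ ((e:ℤ)-1) * ((PF.card : ℤ) - 1) :=
        mul_le_mul_of_nonneg_left (by omega : (PF₁.card : ℤ) ≤ (PF.card : ℤ) - 1)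
          (by linarith)
      have hexp : ((e:ℤ)-1) * ((PF.card : ℤ) - 1) = ((e:ℤ)-1) * (PF.card : ℤ) - ((e:ℤ)-1) := by ring
      have hdle : ((F.filter (fun A => T ⊆ A)).card : ℤ) ≤ (e:ℤ) - 1 := by
        have h4 : (F.filter (fun A => T ⊆ A)).card + 1 ≤ e := hdlt
        push_cast at h4 ⊢
        omega
      have hsplit' : ((F.filter (fun A => T ⊆ A)).card : ℤ) + (F₁.card : ℤ) = (F.card : ℤ) := by
        exact_mod_cast hsplit
      linarith

theorem stmt_2 (n r e k : ℕ) (hr : 3 ≤ r) (he : 3 ≤ e) (hk : 2 ≤ k) (hrk : k < r) :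
    (extremalF r n (e * r - (e - 1) * k) e : ℤ) - ((e : ℤ) - 1) * Nat.choose n (k - 1)
      ≤ (extremalFE1 r n e k : ℤ) := by
  obtain ⟨e', rfl⟩ : ∃ e', e = e' + 3 := ⟨e - 3, by omega⟩
  clear he
  set v := (e' + 3) * r - (e' + 3 - 1) * k with hvdef
  have hsetne : {m | ∃ F : Finset (Finset (Fin n)), UniformH r F ∧ IsGFree v (e' + 3) F ∧ F.card = m}.Nonempty := by
    refine ⟨0, ∅, fun A hA => absurd hA (notMem_empty A), ?_, rfl⟩
    intro S hS hc
    exfalso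
    rw [subset_empty.mp hS] at hc
    simp at hc
  have hsetbdd : BddAbove {m | ∃ F : Finset (Finset (Fin n)), UniformH r F ∧ IsGFree v (e' + 3) F ∧ F.card = m} := by
    refine ⟨Fintype.card (Finset (Fin n)), ?_⟩
    rintro m ⟨F, -, -, rfl⟩
    exact F.card_le_univ.trans (le_of_eq (card_univ))
  have hmem := Nat.sSup_mem hsetne hsetbdd
  obtain ⟨F, hFU, hFG, hFcard⟩ := hmem
  -- apply the deletion lemma
  obtain ⟨F', hF'sub, hF'U, hF'G, hF'code, hF'ineq⟩ :=
    delete r v (e' + 3) k (by omega) F.card F le_rfl hFU hFG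
  -- bound the number of positive-codegree (k-1)-sets
  set PF := ((univ : Finset (Finset (Fin n))).filter
      (fun T => T.card = k - 1 ∧ 0 < (F.filter (fun A => T ⊆ A)).card)) with hPFdef
  have hPle : PF.card ≤ Nat.choose n (k-1) := by
    have hsub2 : PF ⊆ (univ : Finset (Fin n)).powersetCard (k-1) := by
      intro T hT
      rw [mem_powersetCard_univ]
      exact (mem_filter.mp hT).2.1
    calc PF.card ≤ _ := card_le_card hsub2
      _ = Nat.choose n (k-1) := by rw [card_powersetCard, card_univ, Fintype.card_fin]
  -- prove F' is G_r((e-1)r-(e-2)k-1, e-1)-free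
  have hF'G2 : IsGFree ((e' + 3 - 1) * r - (e' + 3 - 2) * k - 1) (e' + 3 - 1) F' := by
    intro S hS hScard
    by_contra hcon
    push_neg at hcon
    have hcon' : (S.biUnion id).card ≤ (e' + 2) * r - (e' + 1) * k - 1 := by
      have h0 : e' + 3 - 1 = e' + 2 := rfl
      have h1 : e' + 3 - 2 = e' + 1 := rfl
      rw [h0, h1] at hcon
      omega
    have hS0 : S.Nonempty := card_pos.mp (by omega)
    obtain ⟨A, hA⟩ := hS0
    have hAF' : A ∈ F' := hS hA
    have hAcard : A.card = r := hF'U A hAF'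
    obtain ⟨T, hTA, hTcard⟩ := exists_subset_card_eq (show k - 1 ≤ A.card by omega)
    have hpos : 0 < (F'.filter (fun A => T ⊆ A)).card :=
      card_pos.mpr ⟨A, mem_filter.mpr ⟨hAF', hTA⟩⟩
    have hecode : e' + 3 ≤ (F'.filter (fun A => T ⊆ A)).card := by
      rcases hF'code T hTcard with h | h
      · omega
      · exact h
    have hnotsub : ¬ (F'.filter (fun A => T ⊆ A)) ⊆ S := by
      intro h
      have := card_le_card h
      omega
    obtain ⟨B, hBf, hBS⟩ := not_subset.mp hnotsub
    have hBF' : B ∈ F' := (mem_filter.mp hBf).1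
    have hTB : T ⊆ B := (mem_filter.mp hBf).2
    have hBcard : B.card = r := hF'U B hBF'
    have hins : (insert B S).card = e' + 3 := by
      rw [card_insert_of_notMem hBS]
      omega
    have hkey := hF'G (insert B S) (insert_subset hBF' hS) hins
    have hTU : T ⊆ S.biUnion id := hTA.trans (subset_biUnion_of_mem id hA)
    have hsubU : (insert B S).biUnion id ⊆ (B \ T) ∪ S.biUnion id := by
      rw [biUnion_insert]
      intro x hx
      rcases mem_union.mp hx with hxB | hxU
      · by_cases hxT : x ∈ T
        · exact mem_union_right _ (hTU hxT)
        · exact mem_union_left _ (mem_sdiff.mpr ⟨hxB, hxT⟩)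
      · exact mem_union_right _ hxU
    have hc1 : ((insert B S).biUnion id).card ≤ (r - (k-1)) + (S.biUnion id).card := by
      calc ((insert B S).biUnion id).card ≤ ((B \ T) ∪ S.biUnion id).card := card_le_card hsubU
        _ ≤ (B \ T).card + (S.biUnion id).card := card_union_le _ _
        _ = (r - (k-1)) + (S.biUnion id).card := by
            rw [card_sdiff_of_subset hTB, hBcard, hTcard]
    -- arithmetic contradiction
    have hkey' : (e' + 2) * r + r - ((e' + 1) * k + k) + 1 ≤ ((insert B S).biUnion id).card := by
      have f1 : (e' + 3) * r = (e' + 2) * r + r := by ring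
      have f2 : (e' + 3 - 1) * k = (e' + 1) * k + k := by
        have h0 : e' + 3 - 1 = e' + 2 := rfl
        rw [h0]; ring
      rw [hvdef, f1, f2] at hkey
      exact hkey
    have f3 : (e' + 1) * k + 1 ≤ (e' + 2) * r := by
      have h5 : (e' + 2) * (k + 1) ≤ (e' + 2) * r := Nat.mul_le_mul_left _ hrk
      nlinarith
    set X := (e' + 2) * r with hX
    set Y := (e' + 1) * k with hY
    clear_value X Y
    omega
  -- F'.card is in the extremalFE1 set
  have hmem2 : F'.card ∈ {m | ∃ F : Finset (Finset (Fin n)), UniformH r F ∧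
      IsGFree ((e' + 3) * r - (e' + 3 - 1) * k) (e' + 3) F ∧
      IsGFree ((e' + 3 - 1) * r - (e' + 3 - 2) * k - 1) (e' + 3 - 1) F ∧
      (∀ T : Finset (Fin n), T.card = k - 1 →
        (F.filter (fun A => T ⊆ A)).card = 0 ∨ e' + 3 ≤ (F.filter (fun A => T ⊆ A)).card) ∧
      F.card = m} := ⟨F', hF'U, hF'G, hF'G2, hF'code, rfl⟩
  have hbdd2 : BddAbove {m | ∃ F : Finset (Finset (Fin n)), UniformH r F ∧
      IsGFree ((e' + 3) * r - (e' + 3 - 1) * k) (e' + 3) F ∧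
      IsGFree ((e' + 3 - 1) * r - (e' + 3 - 2) * k - 1) (e' + 3 - 1) F ∧
      (∀ T : Finset (Fin n), T.card = k - 1 →
        (F.filter (fun A => T ⊆ A)).card = 0 ∨ e' + 3 ≤ (F.filter (fun A => T ⊆ A)).card) ∧
      F.card = m} := by
    refine ⟨Fintype.card (Finset (Fin n)), ?_⟩
    rintro m ⟨G, -, -, -, -, rfl⟩
    exact G.card_le_univ.trans (le_of_eq (card_univ))
  have hle2 : F'.card ≤ extremalFE1 r n (e' + 3) k := le_csSup hbdd2 hmem2
  -- assemble
  have hEF0 : extremalF r n v (e' + 3) = F.card := hFcard.symm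
  have hEF : (extremalF r n v (e' + 3) : ℤ) = (F.card : ℤ) := by exact_mod_cast hEF0
  have hmul2 : (((e' + 3 : ℕ)):ℤ) - 1 = ((e' : ℤ) + 2) := by push_cast; ring
  have hmul3 : (((e' : ℤ) + 2)) * (PF.card : ℤ) ≤ ((e' : ℤ) + 2) * (Nat.choose n (k-1) : ℤ) :=
    mul_le_mul_of_nonneg_left (by exact_mod_cast hPle) (by positivity)
  have hle2' : (F'.card : ℤ) ≤ (extremalFE1 r n (e' + 3) k : ℤ) := by exact_mod_cast hle2
  rw [hEF, hmul2]
  rw [hmul2] at hF'ineq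
  linarith
end

section
/- Let r ≥ 3, e ≥ 3, k ≥ 2 with r > k. Suppose F is an r-uniform hypergraph on [n] that is G_r(er-(e-1)k, e)-free and in which every (k-1)-subset of [n] has codegree either 0 or at least e. Then F is G_r((e-1)r-(e-2)k-1, e-1)-free; that is, any e-1 distinct edges of F have union of size at least (e-1)r-(e-2)k. -/
open Finset

theorem card_union_le_card_sdiff_add_card {α : Type*} [DecidableEq α] {s t u : Finset α}
    (htu : t ⊆ u) : (s ∪ u).card ≤ (s \ t).card + u.card := by
  rw [← card_sdiff_add_card]
  gcongr

theorem IsGFree.of_codegree {n r j v w e : ℕ} {F : Finset (Finset (Fin n))} (hF : UniformH r F)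
    (hj : j ≤ r) (he : 0 < e)
    (hdeg : ∀ T : Finset (Fin n), T.card = j →
      (F.filter (fun A => T ⊆ A)).card = 0 ∨ e + 1 ≤ (F.filter (fun A => T ⊆ A)).card)
    (hfree : IsGFree w (e + 1) F) (hvw : v + (r - j) ≤ w) :
    IsGFree v e F := by
  intro S hSF hScard
  by_contra! hsmall
  obtain ⟨A₀, hA₀⟩ : S.Nonempty := card_pos.1 (hScard ▸ he)
  obtain ⟨T, hTA₀, hTcard⟩ := exists_subset_card_eq (hF A₀ (hSF hA₀) ▸ hj)
  have hcodeg : e + 1 ≤ (F.filter (fun A => T ⊆ A)).card :=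
    (hdeg T hTcard).resolve_left (card_ne_zero_of_mem (mem_filter.2 ⟨hSF hA₀, hTA₀⟩))
  obtain ⟨A, hA, hAS⟩ := exists_mem_notMem_of_card_lt_card
    (by omega : S.card < (F.filter (fun A => T ⊆ A)).card)
  rw [mem_filter] at hA
  have hnew : (A \ T).card = r - j := by rw [card_sdiff_of_subset hA.2, hF A hA.1, hTcard]
  have hunion : (A ∪ S.biUnion id).card ≤ (A \ T).card + (S.biUnion id).card :=
    card_union_le_card_sdiff_add_card (hTA₀.trans (subset_biUnion_of_mem id hA₀))
  have hbig := hfree (insert A S) (insert_subset hA.1 hSF)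
    (by rw [card_insert_of_notMem hAS, hScard])
  rw [biUnion_insert, id] at hbig
  omega

theorem stmt_3_general (n r e k : ℕ) (he : 3 ≤ e) (hrk : k < r)
    (F : Finset (Finset (Fin n))) (hF : UniformH r F)
    (hfree : IsGFree (e * r - (e - 1) * k) e F)
    (hdeg : ∀ T : Finset (Fin n), T.card = k - 1 →
      (F.filter (fun A => T ⊆ A)).card = 0 ∨ e ≤ (F.filter (fun A => T ⊆ A)).card) :
    IsGFree ((e - 1) * r - (e - 2) * k - 1) (e - 1) F := by
  obtain ⟨d, rfl⟩ : ∃ d, e = d + 1 := ⟨e - 1, by omega⟩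
  rw [Nat.add_sub_cancel] at hfree ⊢
  refine IsGFree.of_codegree hF (by omega) (by omega) hdeg hfree ?_
  have hkr : d * k ≤ d * r := Nat.mul_le_mul_left d hrk.le
  have hsub : (d + 1 - 2) * k + k = d * k := by
    rw [← Nat.succ_mul]; congr 1; omega
  rw [add_one_mul]
  omega

theorem stmt_3 (n r e k : ℕ) (hr : 3 ≤ r) (he : 3 ≤ e) (hk : 2 ≤ k) (hrk : k < r)
    (F : Finset (Finset (Fin n))) (hF : UniformH r F)
    (hfree : IsGFree (e * r - (e - 1) * k) e F)
    (hdeg : ∀ T : Finset (Fin n), T.card = k - 1 →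
      (F.filter (fun A => T ⊆ A)).card = 0 ∨ e ≤ (F.filter (fun A => T ⊆ A)).card) :
    IsGFree ((e - 1) * r - (e - 2) * k - 1) (e - 1) F :=
  stmt_3_general n r e k he hrk F hF hfree hdeg
end

section
/- Let t ≥ 3, r ≥ 3, e ≥ 3, k ≥ 2 with r > k and t ≤ e-1. Let F be an r-uniform hypergraph on [n] that is G_r(ir-(i-1)k-1, i)-free for all t ≤ i ≤ e-1, and in which every (k-1)-subset has codegree 0 or at least e. If there exist t-1 distinct edges A_1,...,A_{t-1} ∈ F with |A_1 ∪ ... ∪ A_{t-1}| ≤ (t-1)r-(t-2)k-1, then in fact |A_1 ∪ ... ∪ A_{t-1}| = (t-1)r-(t-2)k-1. -/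
open Finset

/-!
Pick an edge `A` of the configuration and a `(k-1)`-subset `T ⊆ A`. Its codegree is positive,
hence at least `e > t - 1`, so some edge `B ∉ S` also contains `T`. Adding `B` to `S` gives `t`
edges whose union exceeds that of `S` by at most `r - (k-1)`, and `G_r(tr-(t-1)k-1, t)`-freeness
bounds this union from below by `tr-(t-1)k`.
-/

theorem exists_mem_notMem_of_card_lt_card_filter {α : Type*} [DecidableEq α]
    {F S : Finset (Finset α)} {T : Finset α} (h : S.card < (F.filter (T ⊆ ·)).card) :
    ∃ B ∈ F, T ⊆ B ∧ B ∉ S := by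
  obtain ⟨B, hBF, hBS⟩ := not_subset.mp fun hsub => (card_le_card hsub).not_gt h
  exact ⟨B, (mem_filter.mp hBF).1, (mem_filter.mp hBF).2, hBS⟩

theorem card_union_le_card_sdiff_add {α : Type*} [DecidableEq α] {B T U : Finset α}
    (hTU : T ⊆ U) : (B ∪ U).card ≤ (B \ T).card + U.card := by
  rw [← card_sdiff_add_card]
  gcongr

theorem IsGFree.le_card_biUnion_insert {n r v : ℕ} {F S : Finset (Finset (Fin n))}
    (hfree : IsGFree v (S.card + 1) F) (hF : UniformH r F) (hS : S ⊆ F)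
    {B T : Finset (Fin n)} (hBF : B ∈ F) (hBS : B ∉ S) (hTB : T ⊆ B)
    (hTS : T ⊆ S.biUnion id) :
    v + 1 ≤ r - T.card + (S.biUnion id).card := by
  have hins : insert B S ⊆ F := insert_subset hBF hS
  calc v + 1 ≤ ((insert B S).biUnion id).card := hfree _ hins (card_insert_of_notMem hBS)
    _ ≤ (B \ T).card + (S.biUnion id).card := by
      rw [biUnion_insert]
      exact card_union_le_card_sdiff_add hTS
    _ = r - T.card + (S.biUnion id).card := by
      rw [card_sdiff_of_subset hTB, hF B hBF]

theorem mul_sub_mul_sub_one_add_one_eq {t r k : ℕ} (ht : 2 ≤ t) (hk : 1 ≤ k) (hkr : k ≤ r) :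
    t * r - (t - 1) * k - 1 + 1 = r - (k - 1) + ((t - 1) * r - (t - 2) * k - 1) := by
  obtain ⟨i, rfl⟩ : ∃ i, t = i + 2 := ⟨t - 2, by omega⟩
  have hik : (i + 1) * k ≤ (i + 1) * r := Nat.mul_le_mul_left _ hkr
  simp only [Nat.add_sub_cancel, Nat.add_succ_sub_one, add_mul, one_mul] at hik ⊢
  omega

theorem stmt_4_general (n r e k t : ℕ) (ht : 3 ≤ t) (hk : 2 ≤ k)
    (hrk : k < r) (hte : t ≤ e - 1)
    (F : Finset (Finset (Fin n))) (hF : UniformH r F)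
    (hfree : ∀ i, t ≤ i → i ≤ e - 1 → IsGFree (i * r - (i - 1) * k - 1) i F)
    (hdeg : ∀ T : Finset (Fin n), T.card = k - 1 →
      (F.filter (fun A => T ⊆ A)).card = 0 ∨ e ≤ (F.filter (fun A => T ⊆ A)).card)
    (S : Finset (Finset (Fin n))) (hS : S ⊆ F) (hScard : S.card = t - 1)
    (hX : (S.biUnion id).card ≤ (t - 1) * r - (t - 2) * k - 1) :
    (S.biUnion id).card = (t - 1) * r - (t - 2) * k - 1 := by
  obtain ⟨A, hA⟩ : S.Nonempty := card_pos.mp (by omega)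
  obtain ⟨T, hTA, hTcard⟩ : ∃ T ⊆ A, T.card = k - 1 :=
    exists_subset_card_eq (by rw [hF A (hS hA)]; omega)
  have hcod : e ≤ (F.filter (T ⊆ ·)).card :=
    (hdeg T hTcard).resolve_left (card_ne_zero_of_mem (mem_filter.mpr ⟨hS hA, hTA⟩))
  obtain ⟨B, hBF, hTB, hBS⟩ :=
    exists_mem_notMem_of_card_lt_card_filter (F := F) (S := S) (T := T) (by omega)
  have hfreeS : IsGFree (t * r - (t - 1) * k - 1) (S.card + 1) F := by
    rw [hScard, Nat.sub_add_cancel (by omega)]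
    exact hfree t le_rfl hte
  have hlow := hfreeS.le_card_biUnion_insert hF hS hBF hBS hTB
    (hTA.trans (subset_biUnion_of_mem id hA))
  rw [hTcard, mul_sub_mul_sub_one_add_one_eq (by omega) (by omega) hrk.le] at hlow
  omega

theorem stmt_4 (n r e k t : ℕ) (ht : 3 ≤ t) (hr : 3 ≤ r) (he : 3 ≤ e) (hk : 2 ≤ k)
    (hrk : k < r) (hte : t ≤ e - 1)
    (F : Finset (Finset (Fin n))) (hF : UniformH r F)
    (hfree : ∀ i, t ≤ i → i ≤ e - 1 → IsGFree (i * r - (i - 1) * k - 1) i F)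
    (hdeg : ∀ T : Finset (Fin n), T.card = k - 1 →
      (F.filter (fun A => T ⊆ A)).card = 0 ∨ e ≤ (F.filter (fun A => T ⊆ A)).card)
    (S : Finset (Finset (Fin n))) (hS : S ⊆ F) (hScard : S.card = t - 1)
    (hX : (S.biUnion id).card ≤ (t - 1) * r - (t - 2) * k - 1) :
    (S.biUnion id).card = (t - 1) * r - (t - 2) * k - 1 :=
  stmt_4_general n r e k t ht hk hrk hte F hF hfree hdeg S hS hScard hX
end

section
/- Let t ≥ 3, r ≥ 3, e ≥ t+1, k ≥ 2 with r > k. Let F be an r-uniform hypergraph on [n] that is G_r(er-(e-1)k, e)-free and G_r((t+1)r-tk-1, t+1)-free. Suppose A_1,...,A_{t-1} are distinct edges of F with X = A_1 ∪ ... ∪ A_{t-1} of size exactly (t-1)r-(t-2)k-1. Let I(X) = {A ∈ F \ {A_1,...,A_{t-1}} : |A ∩ X| = k-1}. Then the map A ↦ A \ X is injective on I(X), and the (r-k+1)-uniform hypergraph J(X) = {A \ X : A ∈ I(X)} on vertex set [n] \ X is G_{r-k+1}((e-t+1)(r-k+1)-(e-t), e-t+1)-free, provided |I(X)| ≥ e-t+1.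 -/
open Finset

lemma arith_mul1 (r k t : ℕ) (ht : 3 ≤ t) (hrk : k < r) : (t-2)*k + 1 ≤ (t-1)*r := by
  calc (t-2)*k + 1 ≤ (t-2)*r + 1 := by gcongr <;> omega
  _ ≤ (t-1)*r := by
      have : (t-2)*r + r ≤ (t-1)*r := by rw [← Nat.succ_mul]; gcongr; omega
      omega

lemma arith2 (r k t cA cX : ℕ) (ht : 3 ≤ t) (hk : 2 ≤ k) (hrk : k < r)
    (hle : (t+1)*r - t*k - 1 + 1 ≤ cA + cX) (hcA : cA + (k-1) = r)
    (hcX : cX = (t-1)*r - (t-2)*k - 1) : False := by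
  have hA2 := arith_mul1 r k t ht hrk
  have hA4 : t*k + 1 ≤ (t+1)*r := by
    calc t*k + 1 ≤ t*r + 1 := by gcongr <;> omega
    _ ≤ (t+1)*r := by
        have : t*r + r ≤ (t+1)*r := by rw [← Nat.succ_mul]
        omega
  zify [hA4, hA2, show t*k ≤ (t+1)*r by omega, show 1 ≤ (t+1)*r - t*k by omega,
    show (t-2)*k ≤ (t-1)*r by omega, show 1 ≤ (t-1)*r - (t-2)*k by omega,
    show (1:ℕ) ≤ t by omega, show (2:ℕ) ≤ t by omega,
    show (1:ℕ) ≤ k by omega, show k ≤ r from hrk.le] at hle hcA hcX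
  nlinarith [hle, hcA, hcX]

lemma arith1 (r e k t cT cS cX : ℕ) (ht : 3 ≤ t) (he : t + 1 ≤ e) (hk : 2 ≤ k) (hrk : k < r)
    (h1 : e*r - (e-1)*k + 1 ≤ cS) (h2 : cS ≤ cX + cT)
    (hX : cX = (t-1)*r - (t-2)*k - 1) :
    (e-t+1)*(r-k+1) - (e-t) + 1 ≤ cT := by
  have hA1 : (e-1)*k ≤ e*r := Nat.mul_le_mul (by omega) hrk.le
  have hA2 := arith_mul1 r k t ht hrk
  have hA3 : e - t ≤ (e-t+1)*(r-k+1) := by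
    calc e - t ≤ (e-t+1)*1 := by omega
    _ ≤ (e-t+1)*(r-k+1) := by gcongr; omega
  zify [hA1, hA2, hA3, show (t-2)*k ≤ (t-1)*r by omega, show 1 ≤ (t-1)*r - (t-2)*k by omega,
    show (t:ℕ) ≤ e by omega, show (1:ℕ) ≤ e by omega,
    show (1:ℕ) ≤ t by omega, show (2:ℕ) ≤ t by omega, show k ≤ r from hrk.le] at h1 hX ⊢
  nlinarith [h1, h2, hX]

theorem stmt_6 (n r e k t : ℕ) (ht : 3 ≤ t) (hr : 3 ≤ r) (he : t + 1 ≤ e) (hk : 2 ≤ k)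
    (hrk : k < r)
    (F : Finset (Finset (Fin n))) (hF : UniformH r F)
    (hfree1 : IsGFree (e * r - (e - 1) * k) e F)
    (hfree2 : IsGFree ((t + 1) * r - t * k - 1) (t + 1) F)
    (S : Finset (Finset (Fin n))) (hS : S ⊆ F) (hScard : S.card = t - 1)
    (X : Finset (Fin n)) (hXdef : X = S.biUnion id)
    (hX : X.card = (t - 1) * r - (t - 2) * k - 1)
    (I : Finset (Finset (Fin n)))
    (hIdef : I = F.filter (fun A => A ∉ S ∧ (A ∩ X).card = k - 1)) :
    Set.InjOn (fun A => A \ X) (I : Set (Finset (Fin n))) ∧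
    (e - t + 1 ≤ I.card →
      IsGFree ((e - t + 1) * (r - k + 1) - (e - t)) (e - t + 1)
        (I.image (fun A => A \ X))) := by
  have hImem : ∀ A ∈ I, A ∈ F ∧ A ∉ S ∧ (A ∩ X).card = k - 1 := by
    intro A hA
    rw [hIdef, mem_filter] at hA
    exact ⟨hA.1, hA.2.1, hA.2.2⟩
  have hinj : Set.InjOn (fun A => A \ X) (I : Set (Finset (Fin n))) := by
    intro A hA B hB hAB
    simp only [Finset.mem_coe] at hA hB
    obtain ⟨hAF, hAS, hAX⟩ := hImem A hA
    obtain ⟨hBF, hBS, hBX⟩ := hImem B hB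
    by_contra hne
    simp only at hAB
    -- S' = insert A (insert B S) has t+1 edges
    have hAiB : A ∉ insert B S := by simp [hne, hAS]
    have hcard : (insert A (insert B S)).card = t + 1 := by
      rw [card_insert_of_notMem hAiB, card_insert_of_notMem hBS, hScard]
      omega
    have hsub : insert A (insert B S) ⊆ F := by
      intro x hx
      simp only [mem_insert] at hx
      rcases hx with rfl | rfl | hx
      · exact hAF
      · exact hBF
      · exact hS hx
    have hbd := hfree2 _ hsub hcard
    have hunion : (insert A (insert B S)).biUnion id ⊆ (A \ X) ∪ X := by
      intro x hx
      simp only [mem_biUnion, mem_insert, id] at hx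
      obtain ⟨C, hC, hxC⟩ := hx
      rcases hC with rfl | rfl | hC
      · by_cases hxX : x ∈ X
        · exact mem_union_right _ hxX
        · exact mem_union_left _ (mem_sdiff.mpr ⟨hxC, hxX⟩)
      · by_cases hxX : x ∈ X
        · exact mem_union_right _ hxX
        · refine mem_union_left _ ?_
          rw [hAB]
          exact mem_sdiff.mpr ⟨hxC, hxX⟩
      · exact mem_union_right _ (hXdef ▸ mem_biUnion.mpr ⟨C, hC, hxC⟩)
    have hle : ((insert A (insert B S)).biUnion id).card ≤ (A \ X).card + X.card :=
      le_trans (card_le_card hunion) (card_union_le _ _)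
    have hcA : (A \ X).card + (k - 1) = r := by
      have := Finset.card_sdiff_add_card_inter A X
      rw [hAX, hF A hAF] at this
      exact this
    exact arith2 r k t (A \ X).card X.card ht hk hrk (by omega) hcA hX
  refine ⟨hinj, fun _ => ?_⟩
  intro T hT hTcard
  set T' : Finset (Finset (Fin n)) := I.filter (fun A => A \ X ∈ T) with hT'def
  have hT'I : T' ⊆ I := filter_subset _ _
  have himg : T'.image (fun A => A \ X) = T := by
    apply Finset.Subset.antisymm
    · intro x hx
      obtain ⟨A, hA, rfl⟩ := mem_image.mp hx
      exact (mem_filter.mp hA).2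
    · intro x hx
      obtain ⟨A, hA, rfl⟩ := mem_image.mp (hT hx)
      exact mem_image.mpr ⟨A, mem_filter.mpr ⟨hA, hx⟩, rfl⟩
  have hT'card : T'.card = e - t + 1 := by
    rw [← hTcard, ← himg]
    exact (Finset.card_image_of_injOn (hinj.mono (by exact_mod_cast hT'I))).symm
  have hdisj : Disjoint S T' := by
    rw [Finset.disjoint_right]
    intro A hA
    exact (hImem A (hT'I hA)).2.1
  have hScard' : (S ∪ T').card = e := by
    rw [card_union_of_disjoint hdisj, hScard, hT'card]
    omega
  have hsub : S ∪ T' ⊆ F := union_subset hS (fun A hA => (hImem A (hT'I hA)).1)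
  have hbd := hfree1 _ hsub hScard'
  have hunion : (S ∪ T').biUnion id ⊆ X ∪ T.biUnion id := by
    intro x hx
    simp only [mem_biUnion, mem_union, id] at hx
    obtain ⟨C, hC, hxC⟩ := hx
    rcases hC with hC | hC
    · exact mem_union_left _ (hXdef ▸ mem_biUnion.mpr ⟨C, hC, hxC⟩)
    · by_cases hxX : x ∈ X
      · exact mem_union_left _ hxX
      · refine mem_union_right _ (mem_biUnion.mpr ⟨C \ X, (mem_filter.mp hC).2, ?_⟩)
        exact mem_sdiff.mpr ⟨hxC, hxX⟩
  have hle : ((S ∪ T').biUnion id).card ≤ X.card + (T.biUnion id).card :=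
    le_trans (card_le_card hunion) (card_union_le _ _)
  exact arith1 r e k t (T.biUnion id).card ((S ∪ T').biUnion id).card X.card
    ht he hk hrk hbd hle hX
end

section
/- Let t ≥ 3, r ≥ 3, e ≥ t+1, k ≥ 2 with r > k. Let F be an r-uniform hypergraph on [n] satisfying: F is G_r(er-(e-1)k, e)-free, F is G_r(ir-(i-1)k-1, i)-free for every t ≤ i ≤ e-1, and every (k-1)-subset of [n] has codegree 0 or at least e in F. Suppose A_1,...,A_{t-1} are distinct edges with X = A_1 ∪ ... ∪ A_{t-1} satisfying |X| ≤ (t-1)r-(t-2)k-1, and let I(X) = {A ∈ F \ {A_1,...,A_{t-1}} : |A ∩ X| = k-1}. Then |I(X)| ≤ max{e-t+1, f_{r-k+1}(n-|X|, (e-t+1)(r-k+1)-(e-t), e-t+1)}. -/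
open Finset

private lemma image_eq_of_injOn' {α β : Type*} [DecidableEq α] [DecidableEq β]
    {f : α → β} {w u v : Finset α}
    (hf : Set.InjOn f ↑w) (hu : u ⊆ w) (hv : v ⊆ w) (h : u.image f = v.image f) : u = v := by
  ext x
  constructor
  · intro hx
    have hfx : f x ∈ v.image f := h ▸ mem_image_of_mem f hx
    obtain ⟨y, hy, hxy⟩ := mem_image.1 hfx
    have : y = x := hf (hv hy) (hu hx) hxy
    rwa [this] at hy
  · intro hx
    have hfx : f x ∈ u.image f := h.symm ▸ mem_image_of_mem f hx
    obtain ⟨y, hy, hxy⟩ := mem_image.1 hfx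
    have : y = x := hf (hu hy) (hv hx) hxy
    rwa [this] at hy

theorem stmt_7 (n r e k t : ℕ) (ht : 3 ≤ t) (hr : 3 ≤ r) (he : t + 1 ≤ e) (hk : 2 ≤ k)
    (hrk : k < r)
    (F : Finset (Finset (Fin n))) (hF : UniformH r F)
    (hfree1 : IsGFree (e * r - (e - 1) * k) e F)
    (hfree2 : ∀ i, t ≤ i → i ≤ e - 1 → IsGFree (i * r - (i - 1) * k - 1) i F)
    (hdeg : ∀ T : Finset (Fin n), T.card = k - 1 →
      (F.filter (fun A => T ⊆ A)).card = 0 ∨ e ≤ (F.filter (fun A => T ⊆ A)).card)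
    (S : Finset (Finset (Fin n))) (hS : S ⊆ F) (hScard : S.card = t - 1)
    (X : Finset (Fin n)) (hXdef : X = S.biUnion id)
    (hX : X.card ≤ (t - 1) * r - (t - 2) * k - 1)
    (I : Finset (Finset (Fin n)))
    (hIdef : I = F.filter (fun A => A ∉ S ∧ (A ∩ X).card = k - 1)) :
    I.card ≤ max (e - t + 1)
      (extremalF (r - k + 1) (n - X.card) ((e - t + 1) * (r - k + 1) - (e - t)) (e - t + 1)) := by
  classical
  -- normalize parameters
  obtain ⟨s, rfl, hs1⟩ : ∃ s, r = k + s ∧ 1 ≤ s := ⟨r - k, by omega, by omega⟩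
  obtain ⟨a, rfl, ha1⟩ : ∃ a, e = t + a ∧ 1 ≤ a := ⟨e - t, by omega, by omega⟩
  obtain ⟨u, rfl⟩ : ∃ u, t = u + 3 := ⟨t - 3, by omega⟩
  -- numeric identities
  have hid1 : (u + 3 + a) * (k + s) - (u + 3 + a - 1) * k = (u + 3 + a) * s + k := by
    have h1 : u + 3 + a - 1 = u + 2 + a := by omega
    have h2 : (u + 3 + a) * (k + s) = (u + 2 + a) * k + ((u + 3 + a) * s + k) := by ring
    rw [h1, h2, Nat.add_sub_cancel_left]
  have hid2 : (u + 3 - 1) * (k + s) - (u + 3 - 2) * k - 1 = (u + 2) * s + k - 1 := by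
    have h1 : u + 3 - 1 = u + 2 := by omega
    have h2 : u + 3 - 2 = u + 1 := by omega
    have h3 : (u + 2) * (k + s) = (u + 1) * k + ((u + 2) * s + k) := by ring
    rw [h1, h2, h3, Nat.add_sub_cancel_left]
  have hid3 : (u + 4) * (k + s) - (u + 4 - 1) * k - 1 = (u + 4) * s + k - 1 := by
    have h1 : u + 4 - 1 = u + 3 := by omega
    have h2 : (u + 4) * (k + s) = (u + 3) * k + ((u + 4) * s + k) := by ring
    rw [h2, h1, Nat.add_sub_cancel_left]
  have hid4 : (u + 3 + a - (u + 3) + 1) * ((k + s) - k + 1) - (u + 3 + a - (u + 3))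
      = a * s + s + 1 := by
    have h1 : u + 3 + a - (u + 3) = a := by omega
    have h2 : (k + s) - k = s := by omega
    have h3 : (a + 1) * (s + 1) = a + (a * s + s + 1) := by ring
    rw [h1, h2, h3, Nat.add_sub_cancel_left]
  have hrk1 : (k + s) - k + 1 = s + 1 := by omega
  have het : u + 3 + a - (u + 3) + 1 = a + 1 := by omega
  -- basic facts about X and I
  have hXsub : ∀ A ∈ S, A ⊆ X := by
    intro A hA
    rw [hXdef]
    exact subset_biUnion_of_mem id hA
  have hXle' : X.card ≤ (u + 2) * s + k - 1 := by rw [← hid2]; exact hX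
  have hXpos : 0 < (u + 2) * s + k := by positivity
  have hXlt : X.card < (u + 2) * s + k :=
    lt_of_le_of_lt hXle' (Nat.sub_lt hXpos one_pos)
  have hImem : ∀ A ∈ I, A ∈ F ∧ A ∉ S ∧ (A ∩ X).card = k - 1 := by
    intro A hA
    rw [hIdef, mem_filter] at hA
    tauto
  have hdiffcard : ∀ A ∈ I, (A \ X).card = s + 1 := by
    intro A hA
    obtain ⟨hAF, -, hAX⟩ := hImem A hA
    have h1 := card_sdiff_add_card_inter A X
    have h2 := hF A hAF
    omega
  have hdiffsub : ∀ A ∈ I, A \ X ⊆ Xᶜ := by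
    intro A hA x hx
    simp only [mem_sdiff] at hx
    simpa [Finset.mem_compl] using hx.2
  -- injectivity of A ↦ A \ X on I
  have hinj : ∀ A ∈ I, ∀ B ∈ I, A \ X = B \ X → A = B := by
    intro A hA B hB hAB
    by_contra hne
    obtain ⟨hAF, hAS, -⟩ := hImem A hA
    obtain ⟨hBF, hBS, -⟩ := hImem B hB
    set P : Finset (Finset (Fin n)) := insert A (insert B S) with hP
    have hPF : P ⊆ F := by
      intro C hC
      rw [hP, mem_insert, mem_insert] at hC
      rcases hC with rfl | rfl | hC
      · exact hAF
      · exact hBF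
      · exact hS hC
    have hPcard : P.card = u + 4 := by
      rw [hP, card_insert_of_notMem, card_insert_of_notMem hBS, hScard]
      · omega
      · simp only [mem_insert]
        push_neg
        exact ⟨hne, hAS⟩
    have hPsub : P.biUnion id ⊆ X ∪ (A \ X) := by
      intro x hx
      obtain ⟨C, hC, hxC⟩ := mem_biUnion.1 hx
      simp only [id] at hxC
      rw [hP, mem_insert, mem_insert] at hC
      rw [mem_union]
      rcases hC with rfl | rfl | hC
      · by_cases hxX : x ∈ X
        · exact Or.inl hxX
        · exact Or.inr (mem_sdiff.2 ⟨hxC, hxX⟩)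
      · by_cases hxX : x ∈ X
        · exact Or.inl hxX
        · exact Or.inr (hAB ▸ mem_sdiff.2 ⟨hxC, hxX⟩)
      · exact Or.inl (hXsub C hC hxC)
    have hPle : (P.biUnion id).card ≤ (u + 3) * s + k := by
      have h1 : (P.biUnion id).card ≤ (X ∪ (A \ X)).card := card_le_card hPsub
      have h2 : (X ∪ (A \ X)).card ≤ X.card + (A \ X).card := card_union_le _ _
      have h3 := hdiffcard A hA
      have h4 : (u + 2) * s + s = (u + 3) * s := by ring
      have h5 := hXlt
      set M2 := (u + 2) * s with hM2
      set M3 := (u + 3) * s with hM3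
      clear_value M2 M3
      omega
    rcases eq_or_lt_of_le ha1 with ha2 | ha2
    · -- a = 1 : use hfree1
      have hcard : P.card = u + 3 + a := by omega
      have hkey := hfree1 P hPF hcard
      rw [hid1] at hkey
      have h6 := le_trans hkey hPle
      have h7 : (u + 3 + a) * s = (u + 3) * s + a * s := by ring
      have h8 : 1 * s ≤ a * s := Nat.mul_le_mul_right s ha1
      rw [one_mul] at h8
      rw [h7] at h6
      set M3 := (u + 3) * s with hM3
      set Q := a * s with hQ
      clear_value M3 Q
      omega
    · -- a ≥ 2 : use hfree2 at i = t + 1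
      have hkey := hfree2 (u + 4) (by omega) (by omega) P hPF hPcard
      rw [hid3] at hkey
      have h6 := le_trans hkey hPle
      have h7 : (u + 4) * s = (u + 3) * s + s := by ring
      rw [h7] at h6
      set M3 := (u + 3) * s with hM3
      clear_value M3
      omega
  -- the trace construction
  rcases eq_or_ne I ∅ with hIe | hIne
  · simp [hIe]
  obtain ⟨A0, hA0⟩ := nonempty_iff_ne_empty.2 hIne
  have hXcompl : (Xᶜ : Finset (Fin n)).card = n - X.card := by
    rw [card_compl, Fintype.card_fin]
  have hmpos : 0 < n - X.card := by
    have h1 := hdiffcard A0 hA0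
    have h2 : (A0 \ X).card ≤ (Xᶜ : Finset (Fin n)).card := card_le_card (hdiffsub A0 hA0)
    omega
  -- injection from Xᶜ into Fin (n - X.card)
  obtain ⟨g⟩ : Nonempty ({x // x ∈ (Xᶜ : Finset (Fin n))} ↪ Fin (n - X.card)) := by
    apply Function.Embedding.nonempty_of_card_le
    rw [Fintype.card_coe, Fintype.card_fin, hXcompl]
  set f : Fin n → Fin (n - X.card) := fun x =>
    if h : x ∈ (Xᶜ : Finset (Fin n)) then g ⟨x, h⟩ else ⟨0, hmpos⟩ with hf
  have hfinj : Set.InjOn f ↑(Xᶜ : Finset (Fin n)) := by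
    intro x hx y hy hxy
    simp only [Finset.mem_coe] at hx hy
    rw [hf] at hxy
    simp only [dif_pos hx, dif_pos hy] at hxy
    have := g.injective hxy
    exact congrArg Subtype.val this
  set ψ : Finset (Fin n) → Finset (Fin (n - X.card)) := fun A => (A \ X).image f with hψ
  have hψinj : Set.InjOn ψ ↑I := by
    intro A hA B hB hAB
    simp only [Finset.mem_coe] at hA hB
    exact hinj A hA B hB
      (image_eq_of_injOn' hfinj (hdiffsub A hA) (hdiffsub B hB) hAB)
  set F' : Finset (Finset (Fin (n - X.card))) := I.image ψ with hF'
  have hF'card : F'.card = I.card := card_image_of_injOn hψinj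
  -- F' is uniform
  have hF'unif : UniformH (s + 1) F' := by
    intro B hB
    obtain ⟨A, hA, rfl⟩ := mem_image.1 hB
    rw [hψ]
    rw [card_image_of_injOn (hfinj.mono (by exact_mod_cast hdiffsub A hA))]
    exact hdiffcard A hA
  -- F' is G-free
  have hF'free : IsGFree (a * s + s + 1) (a + 1) F' := by
    intro S' hS' hS'card
    set T : Finset (Finset (Fin n)) := I.filter (fun A => ψ A ∈ S') with hT
    have hTI : T ⊆ I := filter_subset _ _
    have hTim : T.image ψ = S' := by
      apply Subset.antisymm
      · intro y hy
        obtain ⟨A, hA, rfl⟩ := mem_image.1 hy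
        exact (mem_filter.1 hA).2
      · intro y hy
        obtain ⟨A, hA, rfl⟩ := mem_image.1 (hS' hy)
        exact mem_image_of_mem ψ (mem_filter.2 ⟨hA, hy⟩)
    have hTcard : T.card = a + 1 := by
      rw [← hS'card, ← hTim]
      exact (card_image_of_injOn (hψinj.mono (by exact_mod_cast hTI))).symm
    -- the e edges S ∪ T
    have hdisj : Disjoint S T := by
      rw [disjoint_right]
      intro A hA hAS
      exact (hImem A (hTI hA)).2.1 hAS
    have hPF : S ∪ T ⊆ F := union_subset hS (fun A hA => (hImem A (hTI hA)).1)
    have hPcard : (S ∪ T).card = u + 3 + a := by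
      rw [card_union_of_disjoint hdisj, hScard, hTcard]
      omega
    have hkey := hfree1 (S ∪ T) hPF hPcard
    rw [hid1] at hkey
    set U : Finset (Fin n) := T.biUnion id with hU
    have hPU : (S ∪ T).biUnion id = X ∪ U := by
      ext x
      simp only [mem_biUnion, mem_union, hXdef, hU, id]
      constructor
      · rintro ⟨C, hC | hC, hxC⟩
        · exact Or.inl ⟨C, hC, hxC⟩
        · exact Or.inr ⟨C, hC, hxC⟩
      · rintro (⟨C, hC, hxC⟩ | ⟨C, hC, hxC⟩)
        · exact ⟨C, Or.inl hC, hxC⟩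
        · exact ⟨C, Or.inr hC, hxC⟩
    have hcardXU : (X ∪ U).card = X.card + (U \ X).card := by
      rw [← union_sdiff_self_eq_union, card_union_of_disjoint disjoint_sdiff]
    have hUlb : a * s + s + 2 ≤ (U \ X).card := by
      rw [hPU, hcardXU] at hkey
      have h1 : (u + 3 + a) * s = (u + 2) * s + (a * s + s) := by ring
      have h2 := hXlt
      rw [h1] at hkey
      set M2 := (u + 2) * s with hM2
      set Q := a * s with hQ
      clear_value M2 Q
      omega
    -- identify S'.biUnion id with the image of U \ X
    have hbi : S'.biUnion id = (U \ X).image f := by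
      rw [← hTim, image_biUnion]
      have h1 : (T.biUnion fun A => ψ A) = (T.biUnion fun A => A \ X).image f := by
        rw [hψ]
        ext y
        simp only [mem_biUnion, mem_image]
        constructor
        · rintro ⟨A, hA, x, hx, rfl⟩
          exact ⟨x, ⟨A, hA, hx⟩, rfl⟩
        · rintro ⟨x, ⟨A, hA, hx⟩, rfl⟩
          exact ⟨A, hA, x, hx, rfl⟩
      have h2 : (T.biUnion fun A => A \ X) = U \ X := by
        ext x
        simp only [mem_biUnion, mem_sdiff, hU, id]
        tauto
      simpa [h2] using h1
    have hUsub : U \ X ⊆ Xᶜ := by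
      intro x hx
      simpa [Finset.mem_compl] using (mem_sdiff.1 hx).2
    rw [hbi, card_image_of_injOn (hfinj.mono (by exact_mod_cast hUsub))]
    exact hUlb
  -- conclude
  have hat : u + 3 + a - (u + 3) = a := by omega
  have hid4' : (a + 1) * (s + 1) - a = a * s + s + 1 := by
    have h3 : (a + 1) * (s + 1) = a + (a * s + s + 1) := by ring
    rw [h3, Nat.add_sub_cancel_left]
  rw [hat, hrk1, hid4']
  refine le_trans ?_ (le_max_right _ _)
  rw [← hF'card]
  apply le_csSup
  · refine ⟨Fintype.card (Finset (Fin (n - X.card))), ?_⟩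
    rintro m ⟨F0, -, -, rfl⟩
    exact card_le_univ F0
  · exact ⟨F', hF'unif, hF'free, rfl⟩
end

section
/- For all fixed integers r ≥ 2 and e ≥ 2, and all sufficiently large n (as a function of r and e), f_r(n, er-(e-1), e) < n/(r-1), where f_r(n, v, e) is the maximum number of edges in an n-vertex r-uniform hypergraph in which any e distinct edges have union of size at least v+1. -/
open Finset

/-! Call two edges adjacent when they meet. Growing a connected subfamily one edge at a time,
each new edge meeting the earlier ones, gives `k` edges on at most `k (r - 1) + 1` vertices, so
freeness leaves every component `C` with fewer than `e` edges. A component with at most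
`|C| (r - 1)` vertices (a cyclic one) can be taken whole at a cost of `r - 1` vertices per edge,
so the cyclic components together also have fewer than `e` edges. Every other component has
`|C| < e` and more than `|C| (r - 1)` vertices, so `((e - 1) (r - 1) + 1) |C| ≤ (e - 1) |V(C)|`.
Components are vertex-disjoint, so summing gives `((e - 1) (r - 1) + 1) |F| ≤ (e - 1) n + O(1)`,
which is below `n / (r - 1)` once `n` is large. -/

variable {α : Type*}

theorem card_biUnion_insert_add_one_le [DecidableEq α] {A : Finset α} {S : Finset (Finset α)}
    (h : ¬Disjoint A (S.biUnion id)) :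
    ((insert A S).biUnion id).card + 1 ≤ (S.biUnion id).card + A.card := by
  rw [biUnion_insert, id]
  have := card_union_add_card_inter A (S.biUnion id)
  have := card_pos.2 (not_disjoint_iff_nonempty_inter.1 h)
  omega

-- The vertex type is all of `Finset α`; sets outside `F` are isolated.
def meetGraph (F : Finset (Finset α)) : SimpleGraph (Finset α) where
  Adj A B := A ≠ B ∧ A ∈ F ∧ B ∈ F ∧ ¬Disjoint A B
  symm := ⟨fun _ _ ⟨hne, hA, hB, h⟩ => ⟨hne.symm, hB, hA, fun h' => h h'.symm⟩⟩
  loopless := ⟨fun _ h => h.1 rfl⟩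

theorem meetGraph_adj {F : Finset (Finset α)} {A B : Finset α} :
    (meetGraph F).Adj A B ↔ A ≠ B ∧ A ∈ F ∧ B ∈ F ∧ ¬Disjoint A B :=
  Iff.rfl

open Classical in
noncomputable def meetComponent (F : Finset (Finset α))
    (c : (meetGraph F).ConnectedComponent) : Finset (Finset α) :=
  F.filter fun A => (meetGraph F).connectedComponentMk A = c

section MeetComponent

variable {F : Finset (Finset α)} {c c' : (meetGraph F).ConnectedComponent}

theorem mem_meetComponent {A : Finset α} :
    A ∈ meetComponent F c ↔ A ∈ F ∧ (meetGraph F).connectedComponentMk A = c := by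
  simp [meetComponent]

theorem meetComponent_subset : meetComponent F c ⊆ F := fun _ hA => (mem_meetComponent.1 hA).1

theorem disjoint_meetComponent (h : c ≠ c') : Disjoint (meetComponent F c) (meetComponent F c') :=
  Finset.disjoint_left.2 fun _ hA hA' =>
    h ((mem_meetComponent.1 hA).2.symm.trans (mem_meetComponent.1 hA').2)

open Classical in
theorem card_eq_sum_card_meetComponent (F : Finset (Finset α)) :
    F.card = ∑ c ∈ F.image (meetGraph F).connectedComponentMk, (meetComponent F c).card := by
  rw [card_eq_sum_card_image (meetGraph F).connectedComponentMk F]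
  rfl

variable [DecidableEq α]

theorem disjoint_biUnion_meetComponent (h : c ≠ c') :
    Disjoint ((meetComponent F c).biUnion id) ((meetComponent F c').biUnion id) := by
  refine Finset.disjoint_left.2 fun x hx hx' => h ?_
  obtain ⟨A, hA, hxA⟩ := mem_biUnion.1 hx
  obtain ⟨B, hB, hxB⟩ := mem_biUnion.1 hx'
  rw [← (mem_meetComponent.1 hA).2, ← (mem_meetComponent.1 hB).2]
  obtain rfl | hAB := eq_or_ne A B
  · rfl
  · exact SimpleGraph.ConnectedComponent.connectedComponentMk_eq_of_adj
      ⟨hAB, (mem_meetComponent.1 hA).1, (mem_meetComponent.1 hB).1,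
        not_disjoint_iff.2 ⟨x, hxA, hxB⟩⟩

theorem sum_card_biUnion_meetComponent_le [Fintype α]
    (𝒦 : Finset (meetGraph F).ConnectedComponent) :
    ∑ c ∈ 𝒦, ((meetComponent F c).biUnion id).card ≤ Fintype.card α := by
  rw [← card_biUnion fun c _ c' _ h => disjoint_biUnion_meetComponent h]
  exact card_le_univ _

theorem exists_mem_meetComponent_not_disjoint {S : Finset (Finset α)}
    (hS : S ⊆ meetComponent F c) (hne : S.Nonempty) {B : Finset α}
    (hB : B ∈ meetComponent F c) (hBS : B ∉ S) :
    ∃ Y ∈ meetComponent F c, Y ∉ S ∧ ¬Disjoint Y (S.biUnion id) := by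
  obtain ⟨X, hX⟩ := hne
  obtain ⟨p⟩ : (meetGraph F).Reachable X B := SimpleGraph.ConnectedComponent.exact
    ((mem_meetComponent.1 (hS hX)).2.trans (mem_meetComponent.1 hB).2.symm)
  obtain ⟨d, -, hd, hd'⟩ := p.exists_boundary_dart (S : Set (Finset α)) hX hBS
  obtain ⟨-, -, hY, hmeet⟩ := meetGraph_adj.1 d.adj
  refine ⟨d.snd, mem_meetComponent.2 ⟨hY, ?_⟩, hd', ?_⟩
  · exact (SimpleGraph.ConnectedComponent.connectedComponentMk_eq_of_adj d.adj).symm.trans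
      (mem_meetComponent.1 (hS hd)).2
  · exact fun h => hmeet (h.mono_right (subset_biUnion_of_mem id hd)).symm

theorem exists_subset_meetComponent_card_eq {r k : ℕ} (hF : ∀ A ∈ F, A.card ≤ r)
    (hk : k ≤ (meetComponent F c).card) :
    ∃ S ⊆ meetComponent F c, S.card = k ∧ (S.biUnion id).card ≤ k * (r - 1) + 1 := by
  induction k with
  | zero => exact ⟨∅, empty_subset _, rfl, by simp⟩
  | succ k ih =>
    obtain ⟨S, hSC, rfl, hSV⟩ := ih (by omega)
    obtain ⟨B, hB, hBS⟩ := exists_mem_notMem_of_card_lt_card hk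
    obtain rfl | hne := S.eq_empty_or_nonempty
    · have := hF B (meetComponent_subset hB)
      refine ⟨{B}, singleton_subset_iff.2 hB, rfl, ?_⟩
      simp only [singleton_biUnion, id, card_empty]
      omega
    · obtain ⟨Y, hY, hYS, hmeet⟩ := exists_mem_meetComponent_not_disjoint hSC hne hB hBS
      have := card_biUnion_insert_add_one_le hmeet
      have := hF Y (meetComponent_subset hY)
      refine ⟨insert Y S, insert_subset hY hSC, card_insert_of_notMem hYS, ?_⟩
      rw [add_one_mul]
      omega

theorem exists_subset_card_eq_of_cyclic {r : ℕ} (hF : ∀ A ∈ F, A.card ≤ r)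
    (𝒦 : Finset (meetGraph F).ConnectedComponent)
    (h𝒦 : ∀ c ∈ 𝒦,
      ((meetComponent F c).biUnion id).card ≤ (meetComponent F c).card * (r - 1))
    {k : ℕ} (hk : k ≤ ∑ c ∈ 𝒦, (meetComponent F c).card) :
    ∃ T ⊆ 𝒦.biUnion (meetComponent F),
      T.card = k ∧ (T.biUnion id).card ≤ k * (r - 1) + 1 := by
  classical
  induction 𝒦 using Finset.induction_on generalizing k with
  | empty => exact ⟨∅, empty_subset _, by simp_all⟩
  | insert c 𝒦 hc ih =>
    rw [sum_insert hc] at hk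
    rw [biUnion_insert]
    by_cases hkc : k ≤ (meetComponent F c).card
    · obtain ⟨S, hS, hSk, hSV⟩ := exists_subset_meetComponent_card_eq hF hkc
      exact ⟨S, hS.trans subset_union_left, hSk, hSV⟩
    obtain ⟨T, hT, hTk, hTV⟩ :=
      ih (fun c' hc' => h𝒦 c' (mem_insert_of_mem hc')) (k := k - (meetComponent F c).card)
        (by omega)
    have hdisj : Disjoint (meetComponent F c) T :=
      ((disjoint_biUnion_right _ _ _).2 fun c' hc' =>
        disjoint_meetComponent (ne_of_mem_of_not_mem hc' hc).symm).mono_right hT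
    refine ⟨meetComponent F c ∪ T, union_subset_union (subset_refl _) hT, ?_, ?_⟩
    · rw [card_union_of_disjoint hdisj, hTk]
      omega
    · have := h𝒦 c (mem_insert_self c 𝒦)
      have := card_union_le ((meetComponent F c).biUnion id) (T.biUnion id)
      rw [union_biUnion]
      have : k * (r - 1) = (meetComponent F c).card * (r - 1) +
          (k - (meetComponent F c).card) * (r - 1) := by
        rw [← add_mul, Nat.add_sub_cancel' (by omega)]
      omega

end MeetComponent

open Classical in
theorem mul_card_le_of_forall_card_biUnion_gt [DecidableEq α] [Fintype α]
    {F : Finset (Finset α)} {r e : ℕ} (hF : ∀ A ∈ F, A.card ≤ r)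
    (hfree : ∀ S ⊆ F, S.card = e → e * (r - 1) + 1 < (S.biUnion id).card) :
    ((e - 1) * (r - 1) + 1) * F.card ≤
      (e - 1) * Fintype.card α + ((e - 1) * (r - 1) + 1) * (e - 1) := by
  set Q := (e - 1) * (r - 1) + 1
  have hcomp (c) : (meetComponent F c).card < e := by
    by_contra! h
    obtain ⟨S, hS, hSe, hSV⟩ := exists_subset_meetComponent_card_eq hF h
    exact (hfree S (hS.trans meetComponent_subset) hSe).not_ge hSV
  set cyclic := (F.image (meetGraph F).connectedComponentMk).filter fun c =>
    ((meetComponent F c).biUnion id).card ≤ (meetComponent F c).card * (r - 1)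
  set trees := (F.image (meetGraph F).connectedComponentMk).filter fun c =>
    ¬((meetComponent F c).biUnion id).card ≤ (meetComponent F c).card * (r - 1)
  have hcyclic : ∑ c ∈ cyclic, (meetComponent F c).card < e := by
    by_contra! h
    obtain ⟨T, hT, hTe, hTV⟩ :=
      exists_subset_card_eq_of_cyclic hF cyclic (fun c hc => (mem_filter.1 hc).2) h
    refine (hfree T (hT.trans ?_) hTe).not_ge hTV
    exact biUnion_subset.2 fun _ _ => meetComponent_subset
  have htree : ∀ c ∈ trees, Q * (meetComponent F c).card ≤
      (e - 1) * ((meetComponent F c).biUnion id).card := by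
    intro c hc
    have hV := (mem_filter.1 hc).2
    have hC := hcomp c
    calc Q * (meetComponent F c).card
        = (e - 1) * ((meetComponent F c).card * (r - 1)) + (meetComponent F c).card := by ring
      _ ≤ (e - 1) * ((meetComponent F c).card * (r - 1) + 1) := by rw [mul_add_one]; omega
      _ ≤ (e - 1) * ((meetComponent F c).biUnion id).card := by gcongr; omega
  calc Q * F.card
      = Q * ∑ c ∈ cyclic, (meetComponent F c).card +
          Q * ∑ c ∈ trees, (meetComponent F c).card := by
        rw [card_eq_sum_card_meetComponent, ← sum_filter_add_sum_filter_not _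
          (fun c => ((meetComponent F c).biUnion id).card ≤ (meetComponent F c).card * (r - 1)),
          mul_add]
    _ ≤ Q * (e - 1) + (e - 1) * ∑ c ∈ trees, ((meetComponent F c).biUnion id).card := by
        rw [mul_sum trees, mul_sum trees]
        exact add_le_add (Nat.mul_le_mul_left Q (Nat.le_sub_one_of_lt hcyclic)) (sum_le_sum htree)
    _ ≤ (e - 1) * Fintype.card α + Q * (e - 1) := by
        rw [add_comm]
        gcongr
        exact sum_card_biUnion_meetComponent_le trees

theorem card_mul_pred_lt_of_forall_card_biUnion_gt [DecidableEq α] [Fintype α]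
    {F : Finset (Finset α)} {r e : ℕ} (hF : ∀ A ∈ F, A.card ≤ r)
    (hfree : ∀ S ⊆ F, S.card = e → e * (r - 1) + 1 < (S.biUnion id).card)
    (hα : ((e - 1) * (r - 1) + 1) * (e - 1) * (r - 1) < Fintype.card α) :
    F.card * (r - 1) < Fintype.card α := by
  have h := mul_card_le_of_forall_card_biUnion_gt hF hfree
  refine Nat.lt_of_mul_lt_mul_left (a := (e - 1) * (r - 1) + 1) ?_
  calc ((e - 1) * (r - 1) + 1) * (F.card * (r - 1))
      ≤ ((e - 1) * Fintype.card α + ((e - 1) * (r - 1) + 1) * (e - 1)) * (r - 1) := by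
        rw [← mul_assoc]; gcongr
    _ < ((e - 1) * (r - 1) + 1) * Fintype.card α := by nlinarith

theorem extremalF_mul_lt {r n v e : ℕ} (hn : 0 < n)
    (h : ∀ F : Finset (Finset (Fin n)), UniformH r F → IsGFree v e F → F.card * (r - 1) < n) :
    extremalF r n v e * (r - 1) < n := by
  obtain hS | hS := Set.eq_empty_or_nonempty
    {m | ∃ F : Finset (Finset (Fin n)), UniformH r F ∧ IsGFree v e F ∧ F.card = m}
  · simp [extremalF, hS, hn]
  · obtain ⟨F, hu, hf, hF⟩ := Nat.sSup_mem hS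
      ⟨Fintype.card (Finset (Fin n)), by rintro _ ⟨F, -, -, rfl⟩; exact card_le_univ F⟩
    rw [extremalF, ← hF]
    exact h F hu hf

theorem stmt_8 (r e : ℕ) (hr : 2 ≤ r) (he : 2 ≤ e) :
    ∃ N : ℕ, ∀ n : ℕ, N ≤ n →
      (extremalF r n (e * r - (e - 1)) e : ℝ) < (n : ℝ) / ((r : ℝ) - 1) := by
  refine ⟨((e - 1) * (r - 1) + 1) * (e - 1) * (r - 1) + 1, fun n hn => ?_⟩
  have hlt : extremalF r n (e * r - (e - 1)) e * (r - 1) < n := by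
    refine extremalF_mul_lt (by omega) fun F hu hf => ?_
    have hv : e * r - (e - 1) = e * (r - 1) + 1 := by
      rw [Nat.mul_sub_one]; have := Nat.le_mul_of_pos_right e (by omega : 0 < r); omega
    simpa using card_mul_pred_lt_of_forall_card_biUnion_gt (fun A hA => (hu A hA).le)
      (fun S hS hSe => hv ▸ hf S hS hSe) (by simpa using hn)
  have hr1 : (0 : ℝ) < r - 1 := by
    have : (2 : ℝ) ≤ r := by exact_mod_cast hr
    linarith
  have hlt' : ((extremalF r n (e * r - (e - 1)) e * (r - 1) : ℕ) : ℝ) < n := by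
    exact_mod_cast hlt
  rw [Nat.cast_mul, Nat.cast_sub (by omega), Nat.cast_one] at hlt'
  rwa [lt_div_iff₀ hr1]
end

section
/- Let r ≥ 3, e ≥ 3, k ≥ 2 with r > k, and suppose that for all sufficiently large m, f_{r-k+1}(m, e(r-k+1)-(e-1), e) < m/(r-k). Then for sufficiently large n, every n-vertex G_r(er-(e-1)k, e)-free r-uniform hypergraph F satisfies: for every (k-1)-element subset T of the vertex set, the codegree deg_F(T) < n/(r-k). -/
open Finset

lemma arith1_s9 (e s : ℕ) (he : 1 ≤ e) : e * (s + 1) - (e - 1) = e * s + 1 := by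
  obtain ⟨a, rfl⟩ := Nat.exists_eq_add_of_le he
  have h : (1 + a) * (s + 1) = a * s + a + s + 1 := by ring
  have h3 : (1 + a) * s = a * s + s := by ring
  rw [h, h3]
  generalize a * s = t
  omega

lemma arith2_s9 (e s k : ℕ) (he : 1 ≤ e) : e * (k + s) - (e - 1) * k = e * s + k := by
  obtain ⟨a, rfl⟩ := Nat.exists_eq_add_of_le he
  have h1 : (1 + a) * (k + s) = a * k + (k + s + a * s) := by ring
  have h2 : (1 + a - 1) * k = a * k := by simp
  have h3 : (1 + a) * s = a * s + s := by ring
  rw [h1, h2, h3]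
  generalize a * s = t
  omega

theorem stmt_9 (r e k : ℕ) (hr : 3 ≤ r) (he : 3 ≤ e) (hk : 2 ≤ k) (hrk : k < r)
    (hyp : ∃ M : ℕ, ∀ m : ℕ, M ≤ m →
      (extremalF (r - k + 1) m (e * (r - k + 1) - (e - 1)) e : ℝ) < (m : ℝ) / ((r : ℝ) - k)) :
    ∃ N : ℕ, ∀ n : ℕ, N ≤ n →
      ∀ F : Finset (Finset (Fin n)), UniformH r F → IsGFree (e * r - (e - 1) * k) e F →
        ∀ T : Finset (Fin n), T.card = k - 1 →
          ((F.filter (fun A => T ⊆ A)).card : ℝ) < (n : ℝ) / ((r : ℝ) - k) := by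
  obtain ⟨M, hM⟩ := hyp
  refine ⟨M, fun n hn F hF hFree T hT => ?_⟩
  obtain ⟨s, rfl⟩ : ∃ s, r = k + s := ⟨r - k, by omega⟩
  have hs : 1 ≤ s := by omega
  have hrk1 : k + s - k + 1 = s + 1 := by omega
  set D := F.filter (fun A => T ⊆ A) with hD
  -- injectivity of A ↦ A \ T on D
  have hinj : Set.InjOn (fun A => A \ T) D := by
    intro A hA B hB hAB
    have hTA : T ⊆ A := (mem_filter.mp hA).2
    have hTB : T ⊆ B := (mem_filter.mp hB).2
    have := congrArg (fun X => X ∪ T) hAB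
    simpa [sdiff_union_of_subset hTA, sdiff_union_of_subset hTB] using this
  set L := D.image (fun A => A \ T) with hL
  have hcardL : L.card = D.card := card_image_of_injOn hinj
  -- L is (s+1)-uniform
  have hUL : UniformH (s + 1) L := by
    intro B hB
    obtain ⟨A, hA, rfl⟩ := mem_image.mp hB
    have hTA : T ⊆ A := (mem_filter.mp hA).2
    have hAF : A ∈ F := (mem_filter.mp hA).1
    rw [card_sdiff_of_subset hTA, hF A hAF, hT]
    omega
  -- L is GFree
  have hGL : IsGFree (e * s + 1) e L := by
    intro S' hS' hcS'
    obtain ⟨S, hSD, hSim⟩ := Finset.subset_image_iff.mp hS'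
    have hcS : S.card = e := by
      rw [← hcS', ← hSim]
      exact (card_image_of_injOn (hinj.mono (by exact_mod_cast hSD))).symm
    have hSF : S ⊆ F := hSD.trans (filter_subset _ _)
    have h1 := hFree S hSF hcS
    rw [arith2_s9 e s k (by omega)] at h1
    have hUnion : S'.biUnion id = (S.biUnion id) \ T := by
      rw [← hSim]
      ext x
      simp only [mem_biUnion, mem_image, id, mem_sdiff]
      constructor
      · rintro ⟨B, ⟨A, hA, rfl⟩, hx⟩
        exact ⟨⟨A, hA, (mem_sdiff.mp hx).1⟩, (mem_sdiff.mp hx).2⟩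
      · rintro ⟨⟨A, hA, hx⟩, hxT⟩
        exact ⟨A \ T, ⟨A, hA, rfl⟩, mem_sdiff.mpr ⟨hx, hxT⟩⟩
    rw [hUnion]
    have h2 := le_card_sdiff T (S.biUnion id)
    omega
  -- card L ≤ extremalF
  have hle : L.card ≤ extremalF (s + 1) n (e * s + 1) e := by
    apply le_csSup
    · exact ⟨Fintype.card (Finset (Fin n)), fun m ⟨G, _, _, hG⟩ => hG ▸ card_le_univ G⟩
    · exact ⟨L, hUL, hGL, rfl⟩
  have key := hM n hn
  rw [hrk1, arith1_s9 e s (by omega)] at key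
  calc ((D.card : ℝ)) ≤ (extremalF (s + 1) n (e * s + 1) e : ℝ) := by
        exact_mod_cast hcardL ▸ Nat.cast_le.mpr hle
    _ < (n : ℝ) / ((↑(k + s) : ℝ) - k) := key
end
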